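/- For every integer r ≥ 4, there exists an r-uniform bi-hypergraph with exactly r(r − 1) − 1 vertices which is a one-realization of {r, r − 1}. -/

import Mathlib

/-- A bi-hypergraph: a finite vertex set together with a family of bi-edges,
each bi-edge being a subset of the vertex set. -/
structure BiHypergraph (α : Type*) [DecidableEq α] where
  verts : Finset α
  edges : Finset (Finset α)
  edges_sub : ∀ e ∈ edges, e ⊆ verts

namespace BiHypergraph

variable {α : Type*} [DecidableEq α]

/-- `H` is `r`-uniform: every bi-edge has exactly `r` vertices. -/
def IsUniform (H : BiHypergraph α) (r : ℕ) : Prop :=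
  ∀ e ∈ H.edges, e.card = r

/-- `P` is a strict coloring of `H`: a partition of the vertex set into nonempty
classes such that every bi-edge has at least two vertices lying in a common class
and at least two vertices lying in distinct classes.  A strict `k`-coloring is a
strict coloring `P` with `P.card = k`. -/
def IsStrictColoring (H : BiHypergraph α) (P : Finset (Finset α)) : Prop :=
  (∀ C ∈ P, C.Nonempty) ∧
  (∀ C ∈ P, C ⊆ H.verts) ∧
  (∀ x ∈ H.verts, ∃! C, C ∈ P ∧ x ∈ C) ∧
  (∀ e ∈ H.edges,
    (∃ C ∈ P, 2 ≤ (e ∩ C).card) ∧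
    (∃ x ∈ e, ∃ y ∈ e, ∃ C ∈ P, ∃ D ∈ P, C ≠ D ∧ x ∈ C ∧ y ∈ D))

/-- The feasible set of `H`: all `k` such that `H` admits a strict `k`-coloring. -/
def feasibleSet (H : BiHypergraph α) : Set ℕ :=
  {k | ∃ P : Finset (Finset α), H.IsStrictColoring P ∧ P.card = k}

/-- `H` is a one-realization of `S`: its feasible set is `S`, and for every `k`
there is at most one partition which is a strict `k`-coloring of `H`. -/
def IsOneRealization (H : BiHypergraph α) (S : Finset ℕ) : Prop :=
  H.feasibleSet = ↑S ∧
  ∀ P Q : Finset (Finset α), H.IsStrictColoring P → H.IsStrictColoring Q →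
    P.card = Q.card → P = Q

end BiHypergraph

/-
Let `P` partition `{0, …, r(r-1) - 2}` into `{0}`, `{1, …, r-2}` and `r - 2` consecutive blocks of
`r` vertices, and let `Q` merge `{0}` into `{1, …, r-2}`. The bi-edges are the `r`-sets that are
neither rainbow for `P` nor monochromatic for `Q`, so `P` and `Q` are strict colorings, and the
`r`-sets that are not bi-edges are the blocks and the transversals of `P`; every transversal
contains `0` and meets every block. For any strict coloring `R`, the `R`-monochromatic and the
`R`-rainbow `r`-sets are not bi-edges.

If `R` has at least `r` classes, every `R`-rainbow `r`-set is a transversal of `P`: otherwise it is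
a block, and `0` together with two of its vertices outside the class of `0` extends to a rainbow
`r`-set that is neither. Extending rainbow pairs and singletons to rainbow `r`-sets then shows that
two vertices lie in the same class of `R` exactly when they lie in the same class of `P`.

If `R` has fewer than `r` classes, none has more than `r` vertices (it would contain an `r`-set
that is neither a block nor a transversal), so counting vertices leaves `r - 1` classes, all but one
of size `r`. A transversal among them would meet every block and share `0` with every other
transversal, so the classes of size `r` are blocks, and the last class is `{0, …, r-2}`: `R = Q`.
-/

open Finset

namespace BiHypergraph

variable {α : Type*} {P Q R : Finset (Finset α)} {C D : Finset α} {x y : α}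

def IsRainbow (P : Finset (Finset α)) (T : Finset α) : Prop :=
  ∀ C ∈ P, ∀ x ∈ T, ∀ y ∈ T, x ∈ C → y ∈ C → x = y

lemma IsRainbow.mono {S T : Finset α} (hT : IsRainbow P T) (hST : S ⊆ T) : IsRainbow P S :=
  fun C hC x hx y hy => hT C hC x (hST hx) y (hST hy)

lemma isRainbow_singleton (P : Finset (Finset α)) (x : α) : IsRainbow P {x} := by
  intro C _ a ha b hb _ _
  rw [mem_singleton] at ha hb
  rw [ha, hb]

variable [DecidableEq α] {H : BiHypergraph α}

def fibers {β : Type*} [DecidableEq β] (s : Finset α) (f : α → β) : Finset (Finset α) :=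
  s.image fun x => s.filter (f · = f x)

namespace IsStrictColoring

lemma exists_mem (hP : H.IsStrictColoring P) (hx : x ∈ H.verts) : ∃ C ∈ P, x ∈ C :=
  (hP.2.2.1 x hx).exists

lemma eq_of_mem_of_mem (hP : H.IsStrictColoring P) (hC : C ∈ P) (hD : D ∈ P) (hxC : x ∈ C)
    (hxD : x ∈ D) : C = D :=
  (hP.2.2.1 x (hP.2.1 C hC hxC)).unique ⟨hC, hxC⟩ ⟨hD, hxD⟩

lemma sum_card_eq (hP : H.IsStrictColoring P) : ∑ C ∈ P, C.card = H.verts.card := by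
  have hunion : P.biUnion id = H.verts := by
    ext x
    simp only [mem_biUnion, id]
    exact ⟨fun ⟨C, hC, hxC⟩ => hP.2.1 C hC hxC, hP.exists_mem⟩
  rw [← hunion, card_biUnion]
  · rfl
  · intro C hC D hD hCD
    exact disjoint_left.2 fun x hxC hxD => hCD (hP.eq_of_mem_of_mem hC hD hxC hxD)

lemma eq_of_subset (hP : H.IsStrictColoring P) (hQ : H.IsStrictColoring Q) (hPQ : P ⊆ Q) :
    P = Q := by
  refine hPQ.antisymm fun D hD => ?_
  obtain ⟨x, hxD⟩ := hQ.1 D hD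
  obtain ⟨C, hC, hxC⟩ := hP.exists_mem (hQ.2.1 D hD hxD)
  rwa [← hQ.eq_of_mem_of_mem (hPQ hC) hD hxC hxD]

lemma notMem_edges_of_subset (hP : H.IsStrictColoring P) (hC : C ∈ P) {e : Finset α}
    (heC : e ⊆ C) : e ∉ H.edges := fun he => by
  obtain ⟨x, hx, y, hy, C₁, hC₁, C₂, hC₂, hne, hxC₁, hyC₂⟩ := (hP.2.2.2 e he).2
  exact hne ((hP.eq_of_mem_of_mem hC₁ hC hxC₁ (heC hx)).trans
    (hP.eq_of_mem_of_mem hC hC₂ (heC hy) hyC₂))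

lemma notMem_edges_of_isRainbow (hP : H.IsStrictColoring P) {T : Finset α}
    (hT : IsRainbow P T) : T ∉ H.edges := fun he => by
  obtain ⟨C, hC, hTC⟩ := (hP.2.2.2 T he).1
  obtain ⟨x, hx, y, hy, hxy⟩ := one_lt_card.1 hTC
  rw [mem_inter] at hx hy
  exact hxy (hT C hC x hx.1 y hy.1 hx.2 hy.2)

lemma isRainbow_insert (hP : H.IsStrictColoring P) {T : Finset α} (hT : IsRainbow P T)
    (hC : C ∈ P) (hxC : x ∈ C) (hTC : ∀ y ∈ T, y ∉ C) : IsRainbow P (insert x T) := by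
  have key : ∀ D ∈ P, ∀ y ∈ T, x ∈ D → y ∈ D → False := fun D hD y hy hxD hyD =>
    hTC y hy (hP.eq_of_mem_of_mem hD hC hxD hxC ▸ hyD)
  intro D hD a ha b hb haD hbD
  rw [mem_insert] at ha hb
  rcases ha with rfl | ha <;> rcases hb with rfl | hb
  · rfl
  · exact (key D hD b hb haD hbD).elim
  · exact (key D hD a ha hbD haD).elim
  · exact hT D hD a ha b hb haD hbD

lemma isRainbow_pair (hP : H.IsStrictColoring P) (hC : C ∈ P) (hD : D ∈ P) (hxC : x ∈ C)
    (hyD : y ∈ D) (hCD : C ≠ D) : IsRainbow P {x, y} :=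
  hP.isRainbow_insert (isRainbow_singleton P y) hC hxC fun _ hz hzC =>
    hCD (hP.eq_of_mem_of_mem hC hD hzC (mem_singleton.1 hz ▸ hyD))

lemma card_le_of_forall_exists_mem (hP : H.IsStrictColoring P) {T : Finset α}
    (hPT : ∀ C ∈ P, ∃ x ∈ T, x ∈ C) : P.card ≤ T.card :=
  card_le_card_of_forall_subsingleton (fun C x => x ∈ C) hPT fun _ _ _ ⟨hC, hxC⟩ _ ⟨hD, hxD⟩ =>
    hP.eq_of_mem_of_mem hC hD hxC hxD

lemma exists_isRainbow_superset (hP : H.IsStrictColoring P) {T : Finset α}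
    (hT : IsRainbow P T) (hTV : T ⊆ H.verts) {k : ℕ} (hTk : T.card ≤ k) (hkP : k ≤ P.card) :
    ∃ S, T ⊆ S ∧ S ⊆ H.verts ∧ IsRainbow P S ∧ S.card = k := by
  induction k with
  | zero => exact ⟨T, subset_rfl, hTV, hT, Nat.le_zero.1 hTk⟩
  | succ k ih =>
    rcases hTk.eq_or_lt with hTk | hTk
    · exact ⟨T, subset_rfl, hTV, hT, hTk⟩
    obtain ⟨S, hTS, hSV, hS, hSk⟩ := ih (Nat.lt_succ_iff.1 hTk) (by omega)
    obtain ⟨C, hC, hCS⟩ : ∃ C ∈ P, ∀ y ∈ S, y ∉ C := by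
      by_contra! h
      have := hP.card_le_of_forall_exists_mem h
      omega
    obtain ⟨x, hxC⟩ := hP.1 C hC
    refine ⟨insert x S, hTS.trans (subset_insert x S), insert_subset (hP.2.1 C hC hxC) hSV,
      hP.isRainbow_insert hS hC hxC hCS, ?_⟩
    rw [card_insert_of_notMem fun hxS => hCS x hxS hxC, hSk]

lemma eq_fibers {β : Type*} [DecidableEq β] {f : α → β} (hR : H.IsStrictColoring R)
    (hF : H.IsStrictColoring (fibers H.verts f))
    (h : ∀ C ∈ R, ∃ b, C = H.verts.filter (f · = b)) : R = fibers H.verts f := by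
  refine hR.eq_of_subset hF fun C hC => ?_
  obtain ⟨b, rfl⟩ := h C hC
  obtain ⟨x, hx⟩ := hR.1 _ hC
  rw [mem_filter] at hx
  exact mem_image.2 ⟨x, hx.1, by rw [hx.2]⟩

end IsStrictColoring

lemma card_fibers {β : Type*} [DecidableEq β] (s : Finset α) (f : α → β) :
    (fibers s f).card = (s.image f).card := by
  have : fibers s f = (s.image f).image fun b => s.filter (f · = b) := by
    rw [image_image]
    rfl
  rw [this, card_image_of_injOn]
  rintro _ hb _ hb' hbb'
  obtain ⟨x, hx, rfl⟩ := mem_image.1 hb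
  obtain ⟨x', hx', rfl⟩ := mem_image.1 hb'
  have : x ∈ s.filter (f · = f x') := by
    rw [← show s.filter (f · = f x) = s.filter (f · = f x') from hbb']
    exact mem_filter.2 ⟨hx, rfl⟩
  exact (mem_filter.1 this).2

lemma isStrictColoring_fibers {β : Type*} [DecidableEq β] (f : α → β)
    (h : ∀ e ∈ H.edges,
      (∃ x ∈ e, ∃ y ∈ e, x ≠ y ∧ f x = f y) ∧ ∃ x ∈ e, ∃ y ∈ e, f x ≠ f y) :
    H.IsStrictColoring (fibers H.verts f) := by
  have hmem : ∀ {x}, x ∈ H.verts → H.verts.filter (f · = f x) ∈ fibers H.verts f :=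
    fun hx => mem_image_of_mem _ hx
  have hself : ∀ {x}, x ∈ H.verts → x ∈ H.verts.filter (f · = f x) :=
    fun hx => mem_filter.2 ⟨hx, rfl⟩
  refine ⟨?_, ?_, ?_, ?_⟩
  · simp only [fibers, mem_image]
    rintro _ ⟨x, hx, rfl⟩
    exact ⟨x, hself hx⟩
  · simp only [fibers, mem_image]
    rintro _ ⟨x, -, rfl⟩
    exact filter_subset _ _
  · intro x hx
    refine ⟨_, ⟨hmem hx, hself hx⟩, ?_⟩
    simp only [fibers, mem_image]
    rintro _ ⟨⟨y, -, rfl⟩, hxy⟩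
    rw [(mem_filter.1 hxy).2]
  · intro e he
    have heV := H.edges_sub e he
    obtain ⟨⟨x, hx, y, hy, hxy, hfxy⟩, ⟨a, ha, b, hb, hfab⟩⟩ := h e he
    refine ⟨⟨_, hmem (heV hx), ?_⟩, ⟨a, ha, b, hb, _, hmem (heV ha), _, hmem (heV hb), ?_,
      hself (heV ha), hself (heV hb)⟩⟩
    · refine one_lt_card.2 ⟨x, ?_, y, ?_, hxy⟩ <;> simp [hx, hy, heV hx, heV hy, hfxy]
    · intro hab
      exact hfab (mem_filter.1 (hab ▸ hself (heV hb))).2.symm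

lemma isOneRealization_of_forall_eq_or_eq (hP : H.IsStrictColoring P)
    (hQ : H.IsStrictColoring Q) (hPQ : P.card ≠ Q.card)
    (h : ∀ R, H.IsStrictColoring R → R = P ∨ R = Q) :
    H.IsOneRealization {P.card, Q.card} := by
  refine ⟨Set.ext fun k => ⟨?_, ?_⟩, fun R R' hR hR' hRR' => ?_⟩
  · rintro ⟨R, hR, rfl⟩
    rcases h R hR with rfl | rfl <;> simp
  · simp only [coe_insert, coe_singleton, Set.mem_insert_iff, Set.mem_singleton_iff]
    rintro (rfl | rfl)
    exacts [⟨P, hP, rfl⟩, ⟨Q, hQ, rfl⟩]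
  · rcases h R hR with rfl | rfl <;> rcases h R' hR' with rfl | rfl
    all_goals first | rfl | exact absurd hRR' ‹_› | exact absurd hRR'.symm ‹_›

end BiHypergraph

namespace PairRealization

open BiHypergraph

variable {r : ℕ}

def vertices (r : ℕ) : Finset ℕ := range (r * (r - 1) - 1)

-- `coarse r` takes the value `1` on `{0, …, r-2}` and `j` on the block `[(j-1)r - 1, jr - 1)`.
def coarse (r v : ℕ) : ℕ := (v + 1) / r + 1

def fine (r v : ℕ) : ℕ := if v = 0 then 0 else coarse r v

def fineClass (r j : ℕ) : Finset ℕ := (vertices r).filter (fine r · = j)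

def edges (r : ℕ) : Finset (Finset ℕ) :=
  ((vertices r).powersetCard r).filter fun e =>
    (∃ x ∈ e, ∃ y ∈ e, x ≠ y ∧ fine r x = fine r y) ∧ ∃ x ∈ e, ∃ y ∈ e, coarse r x ≠ coarse r y

def hypergraph (r : ℕ) : BiHypergraph ℕ where
  verts := vertices r
  edges := edges r
  edges_sub _ he := (mem_powersetCard.1 (mem_filter.1 he).1).1

def fineColoring (r : ℕ) : Finset (Finset ℕ) := fibers (vertices r) (fine r)

def coarseColoring (r : ℕ) : Finset (Finset ℕ) := fibers (vertices r) (coarse r)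

lemma mem_edges {e : Finset ℕ} : e ∈ edges r ↔ (e ⊆ vertices r ∧ e.card = r) ∧
    (∃ x ∈ e, ∃ y ∈ e, x ≠ y ∧ fine r x = fine r y) ∧ ∃ x ∈ e, ∃ y ∈ e, coarse r x ≠ coarse r y := by
  rw [edges, mem_filter, mem_powersetCard]

lemma isUniform_hypergraph : (hypergraph r).IsUniform r :=
  fun _ he => (mem_edges.1 he).1.2

lemma fine_eq_zero {v : ℕ} : fine r v = 0 ↔ v = 0 := by
  unfold fine coarse
  split_ifs <;> simp_all

lemma fine_le_coarse (v : ℕ) : fine r v ≤ coarse r v := by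
  unfold fine
  split_ifs <;> simp

lemma coarse_eq_of_fine_eq {x y : ℕ} (h : fine r x = fine r y) : coarse r x = coarse r y := by
  by_cases hx : x = 0 <;> by_cases hy : y = 0
  · rw [hx, hy]
  all_goals simp_all [fine, coarse]

lemma coarse_lt (hr : 0 < r) {v : ℕ} (hv : v ∈ vertices r) : coarse r v < r := by
  rw [vertices, mem_range] at hv
  have : (v + 1) / r < r - 1 := (Nat.div_lt_iff_lt_mul hr).2 (by rw [mul_comm]; omega)
  unfold coarse
  omega

lemma fine_lt (hr : 0 < r) {v : ℕ} (hv : v ∈ vertices r) : fine r v < r :=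
  (fine_le_coarse v).trans_lt (coarse_lt hr hv)

lemma mem_vertices_and_coarse_mul_sub_two (hr : 2 ≤ r) {j : ℕ} (hj : 1 ≤ j) (hjr : j < r) :
    j * r - 2 ∈ vertices r ∧ coarse r (j * r - 2) = j := by
  have hjr' : j * r ≤ r * (r - 1) := by rw [mul_comm r]; exact Nat.mul_le_mul_right r (by omega)
  have hrj : r ≤ j * r := Nat.le_mul_of_pos_left r hj
  refine ⟨mem_range.2 (by omega), ?_⟩
  have : (j * r - 2 + 1) / r = j - 1 := by
    apply Nat.div_eq_of_lt_le
    · rw [Nat.sub_mul, one_mul]; omega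
    · rw [Nat.sub_add_cancel hj]; omega
  unfold coarse
  omega

lemma image_coarse (hr : 2 ≤ r) : (vertices r).image (coarse r) = Ico 1 r := by
  refine (image_subset_iff.2 fun v hv => mem_Ico.2 ⟨Nat.le_add_left 1 _, coarse_lt (by omega) hv⟩).antisymm
    fun j hj => ?_
  rw [mem_Ico] at hj
  obtain ⟨hmem, hj'⟩ := mem_vertices_and_coarse_mul_sub_two hr hj.1 hj.2
  exact mem_image.2 ⟨_, hmem, hj'⟩

lemma image_fine (hr : 3 ≤ r) : (vertices r).image (fine r) = range r := by
  refine (image_subset_iff.2 fun v hv => mem_range.2 (fine_lt (by omega) hv)).antisymm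
    fun j hj => ?_
  rw [mem_range] at hj
  rcases Nat.eq_zero_or_pos j with rfl | hj0
  · have : r * 2 ≤ r * (r - 1) := Nat.mul_le_mul_left r (by omega)
    exact mem_image.2 ⟨0, mem_range.2 (by omega), rfl⟩
  obtain ⟨hmem, hj'⟩ := mem_vertices_and_coarse_mul_sub_two (by omega) hj0 hj
  have : j * r - 2 ≠ 0 := by have := Nat.le_mul_of_pos_left r hj0; omega
  exact mem_image.2 ⟨_, hmem, by rw [fine, if_neg this, hj']⟩

lemma card_fineColoring (hr : 3 ≤ r) : (fineColoring r).card = r := by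
  rw [fineColoring, card_fibers, image_fine hr, card_range]

lemma card_coarseColoring (hr : 2 ≤ r) : (coarseColoring r).card = r - 1 := by
  rw [coarseColoring, card_fibers, image_coarse hr, Nat.card_Ico]

lemma isStrictColoring_fineColoring : (hypergraph r).IsStrictColoring (fineColoring r) :=
  isStrictColoring_fibers _ fun _ he =>
    have ⟨_, hfine, x, hx, y, hy, hxy⟩ := mem_edges.1 he
    ⟨hfine, x, hx, y, hy, fun h => hxy (coarse_eq_of_fine_eq h)⟩

lemma isStrictColoring_coarseColoring (hr : 2 ≤ r) :
    (hypergraph r).IsStrictColoring (coarseColoring r) := by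
  refine isStrictColoring_fibers _ fun e he => ⟨?_, (mem_edges.1 he).2.2⟩
  obtain ⟨⟨heV, her⟩, -⟩ := mem_edges.1 he
  refine exists_ne_map_eq_of_card_lt_of_maps_to (t := Ico 1 r) (by simp; omega) fun v hv => ?_
  rw [← image_coarse hr]
  exact mem_image_of_mem _ (heV hv)

lemma coarse_eq_one_iff (hr : 0 < r) {v : ℕ} : coarse r v = 1 ↔ v + 1 < r := by
  simp [coarse, Nat.div_eq_zero_iff, hr.ne']

lemma filter_coarse_eq_one (hr : 2 ≤ r) :
    (vertices r).filter (coarse r · = 1) = range (r - 1) := by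
  have : r * 1 ≤ r * (r - 1) := Nat.mul_le_mul_left r (by omega)
  ext v
  simp only [mem_filter, vertices, mem_range, coarse_eq_one_iff (show 0 < r by omega)]
  omega

lemma card_filter_coarse_eq_le (hr : 0 < r) (s : Finset ℕ) (j : ℕ) :
    (s.filter (coarse r · = j)).card ≤ r := by
  refine (card_le_card_of_injOn (fun v => (v + 1) % r)
    (fun v _ => mem_range.2 (Nat.mod_lt _ hr)) fun x hx y hy hxy => ?_).trans_eq (card_range r)
  have hdiv : (x + 1) / r = (y + 1) / r := by
    have hx' := (mem_filter.1 hx).2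
    have hy' := (mem_filter.1 hy).2
    unfold coarse at hx' hy'
    omega
  suffices x + 1 = y + 1 by omega
  rw [← Nat.div_add_mod (x + 1) r, ← Nat.div_add_mod (y + 1) r, hdiv, show (x + 1) % r = (y + 1) % r from hxy]

lemma fineClass_eq_filter_coarse (hr : 2 ≤ r) {j : ℕ} (hj : 2 ≤ j) :
    fineClass r j = (vertices r).filter (coarse r · = j) := by
  have h0 : coarse r 0 = 1 := (coarse_eq_one_iff (by omega)).2 (by omega)
  ext v
  rw [fineClass, mem_filter, mem_filter, fine]
  split_ifs with hv
  · rw [hv, h0]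
    omega
  · rfl

lemma eq_fineClass_or_injOn (hr : 2 ≤ r) {T : Finset ℕ} (hT : T ⊆ vertices r) (hTr : T.card = r)
    (he : T ∉ edges r) : (∃ j, 2 ≤ j ∧ j < r ∧ T = fineClass r j) ∨ Set.InjOn (fine r) T := by
  by_cases hinj : Set.InjOn (fine r) T
  · exact Or.inr hinj
  have hconst : ∀ x ∈ T, ∀ y ∈ T, coarse r x = coarse r y := by
    by_contra! h
    simp only [Set.InjOn, not_forall] at hinj
    obtain ⟨x, hx, y, hy, hxy, hne⟩ := hinj
    exact he (mem_edges.2 ⟨⟨hT, hTr⟩, ⟨x, hx, y, hy, hne, hxy⟩, h⟩)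
  obtain ⟨v, hv⟩ : T.Nonempty := card_pos.1 (by omega)
  have hTv : T = (vertices r).filter (coarse r · = coarse r v) :=
    eq_of_subset_of_card_le (fun x hx => mem_filter.2 ⟨hT hx, hconst x hx v hv⟩)
      (hTr ▸ card_filter_coarse_eq_le (by omega) _ _)
  have hv2 : 2 ≤ coarse r v := by
    by_contra h
    have : 1 ≤ coarse r v := Nat.le_add_left 1 _
    rw [show coarse r v = 1 by omega, filter_coarse_eq_one hr] at hTv
    have := congrArg card hTv
    rw [card_range] at this
    omega
  exact .inl ⟨_, hv2, coarse_lt (by omega) (hT hv), hTv.trans (fineClass_eq_filter_coarse hr hv2).symm⟩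

section InjOn

variable {T : Finset ℕ} (hT : T ⊆ vertices r) (hTr : T.card = r)
include hT hTr

lemma exists_mem_fine_eq_of_injOn (hinj : Set.InjOn (fine r) T) {j : ℕ} (hj : j < r) :
    ∃ t ∈ T, fine r t = j := by
  have himage : T.image (fine r) = range r :=
    eq_of_subset_of_card_le (image_subset_iff.2 fun v hv => mem_range.2 (fine_lt (by omega) (hT hv)))
      (by rw [card_image_of_injOn hinj, hTr, card_range])
  exact mem_image.1 (himage ▸ mem_range.2 hj)

lemma zero_mem_of_injOn (hr : 0 < r) (hinj : Set.InjOn (fine r) T) : 0 ∈ T := by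
  obtain ⟨t, ht, ht0⟩ := exists_mem_fine_eq_of_injOn hT hTr hinj hr
  rwa [← fine_eq_zero.1 ht0]

lemma injOn_of_zero_mem (hr : 2 ≤ r) (he : T ∉ edges r) (h0 : 0 ∈ T) : Set.InjOn (fine r) T :=
  (eq_fineClass_or_injOn hr hT hTr he).resolve_left fun ⟨j, hj, _, hTj⟩ => by
    rw [hTj, fineClass, mem_filter, fine, if_pos rfl] at h0
    omega

end InjOn

lemma zero_mem_vertices (hr : 3 ≤ r) : 0 ∈ vertices r := by
  have : r * 2 ≤ r * (r - 1) := Nat.mul_le_mul_left r (by omega)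
  exact mem_range.2 (by omega)

section FineCase

variable {R : Finset (Finset ℕ)} (hR : (hypergraph r).IsStrictColoring R) (hr : 3 ≤ r)
  (hRr : r ≤ R.card)
include hR hr hRr

lemma injOn_fine_of_isRainbow {T : Finset ℕ} (hT : T ⊆ vertices r) (hTr : T.card = r)
    (hTR : IsRainbow R T) : Set.InjOn (fine r) T := by
  rcases eq_fineClass_or_injOn (by omega) hT hTr (hR.notMem_edges_of_isRainbow hTR) with
    ⟨j, -, -, hTj⟩ | hinj
  swap
  · exact hinj
  exfalso
  obtain ⟨C₀, hC₀, h0C₀⟩ := hR.exists_mem (zero_mem_vertices hr)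
  have hle : (T.filter (· ∈ C₀)).card ≤ 1 := card_le_one.2 fun x hx y hy => by
    rw [mem_filter] at hx hy
    exact hTR C₀ hC₀ x hx.1 y hy.1 hx.2 hy.2
  obtain ⟨a, ha, b, hb, hab⟩ := one_lt_card.1 (show 1 < (T.filter (· ∉ C₀)).card by
    have := card_filter_add_card_filter_not (s := T) (· ∈ C₀)
    omega)
  rw [mem_filter] at ha hb
  have hrb : IsRainbow R (insert 0 {a, b}) :=
    hR.isRainbow_insert (hTR.mono (insert_subset ha.1 (singleton_subset_iff.2 hb.1))) hC₀ h0C₀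
      (by simpa using ⟨ha.2, hb.2⟩)
  obtain ⟨S, hS, hSV, hSR, hSr⟩ := hR.exists_isRainbow_superset hrb
    (insert_subset (zero_mem_vertices hr) (insert_subset (hT ha.1) (singleton_subset_iff.2 (hT hb.1))))
    ((card_insert_le _ _).trans (by have := card_le_two (a := a) (b := b); omega)) hRr
  have hinj := injOn_of_zero_mem hSV hSr (by omega) (hR.notMem_edges_of_isRainbow hSR)
    (hS (mem_insert_self 0 _))
  exact hab (hinj (hS (by simp)) (hS (by simp))
    ((mem_filter.1 (hTj ▸ ha.1)).2.trans (mem_filter.1 (hTj ▸ hb.1)).2.symm))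

lemma fine_ne_of_ne {C D : Finset ℕ} {x y : ℕ} (hC : C ∈ R) (hD : D ∈ R) (hxC : x ∈ C)
    (hyD : y ∈ D) (hCD : C ≠ D) : fine r x ≠ fine r y := by
  have hxy : x ≠ y := fun h => hCD (hR.eq_of_mem_of_mem hC hD hxC (h ▸ hyD))
  obtain ⟨T, hT, hTV, hTR, hTr⟩ := hR.exists_isRainbow_superset
    (hR.isRainbow_pair hC hD hxC hyD hCD)
    (insert_subset (hR.2.1 C hC hxC) (singleton_subset_iff.2 (hR.2.1 D hD hyD)))
    (card_le_two.trans (by omega)) hRr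
  exact fun h => hxy (injOn_fine_of_isRainbow hR hr hRr hTV hTr hTR (hT (by simp)) (hT (by simp)) h)

lemma fine_eq_of_mem {C : Finset ℕ} {x y : ℕ} (hC : C ∈ R) (hx : x ∈ C) (hy : y ∈ C) :
    fine r x = fine r y := by
  have hCV := hR.2.1 C hC
  obtain ⟨T, hT, hTV, hTR, hTr⟩ := hR.exists_isRainbow_superset (isRainbow_singleton R x)
    (singleton_subset_iff.2 (hCV hx)) (by simp; omega) hRr
  obtain ⟨t, ht, hty⟩ := exists_mem_fine_eq_of_injOn hTV hTr
    (injOn_fine_of_isRainbow hR hr hRr hTV hTr hTR) (fine_lt (by omega) (hCV hy))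
  obtain ⟨D, hD, htD⟩ := hR.exists_mem (hTV ht)
  have hDC : D = C := by_contra fun h => fine_ne_of_ne hR hr hRr hD hC htD hy h hty
  rw [← hTR C hC t ht x (hT (mem_singleton_self x)) (hDC ▸ htD) hx, hty]

lemma eq_fineColoring : R = fineColoring r := by
  refine hR.eq_fibers isStrictColoring_fineColoring fun C hC => ?_
  obtain ⟨x, hx⟩ := hR.1 C hC
  refine ⟨fine r x, ext fun y => ⟨fun hy => mem_filter.2 ⟨hR.2.1 C hC hy,
    fine_eq_of_mem hR hr hRr hC hy hx⟩, fun hy => ?_⟩⟩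
  obtain ⟨hyV, hyx⟩ := mem_filter.1 hy
  obtain ⟨D, hD, hyD⟩ := hR.exists_mem hyV
  by_contra hyC
  exact fine_ne_of_ne hR hr hRr hD hC hyD hx (fun h => hyC (h ▸ hyD)) hyx

end FineCase

section CoarseCase

variable {R : Finset (Finset ℕ)} (hR : (hypergraph r).IsStrictColoring R)
include hR

lemma card_le_of_mem (hr : 3 ≤ r) {C : Finset ℕ} (hC : C ∈ R) : C.card ≤ r := by
  by_contra! hCr
  have hCV := hR.2.1 C hC
  obtain ⟨e, he0, her⟩ := exists_subset_card_eq (show r ≤ (C.erase 0).card by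
    have := pred_card_le_card_erase (s := C) (a := 0)
    omega)
  have heC : e ⊆ C := he0.trans (erase_subset 0 C)
  obtain ⟨j, -, -, rfl⟩ := (eq_fineClass_or_injOn (by omega) (heC.trans hCV) her
    (hR.notMem_edges_of_subset hC heC)).resolve_right fun hinj =>
      (mem_erase.1 (he0 (zero_mem_of_injOn (heC.trans hCV) her (by omega) hinj))).1 rfl
  obtain ⟨z, hzC, hzj⟩ := exists_mem_notMem_of_card_lt_card (her ▸ hCr)
  obtain ⟨w, hw⟩ := card_pos.1 (show 0 < (fineClass r j).card by omega)
  obtain ⟨a, ha, b, hb, hab⟩ := one_lt_card.1 (show 1 < ((fineClass r j).erase w).card by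
    rw [card_erase_of_mem hw]
    omega)
  have hfa : fine r a = j := (mem_filter.1 (mem_of_mem_erase ha)).2
  have hfb : fine r b = j := (mem_filter.1 (mem_of_mem_erase hb)).2
  have hsub : insert z ((fineClass r j).erase w) ⊆ C :=
    insert_subset hzC ((erase_subset _ _).trans heC)
  have hcard : (insert z ((fineClass r j).erase w)).card = r := by
    rw [card_insert_of_notMem fun h => hzj (mem_of_mem_erase h), card_erase_of_mem hw]
    omega
  rcases eq_fineClass_or_injOn (by omega) (hsub.trans hCV) hcard
    (hR.notMem_edges_of_subset hC hsub) with ⟨k, -, -, hk⟩ | hinj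
  · have hak : a ∈ fineClass r k := hk ▸ mem_insert_of_mem ha
    have hzk : z ∈ fineClass r k := hk ▸ mem_insert_self z _
    rw [fineClass, mem_filter] at hak hzk
    exact hzj (mem_filter.2 ⟨hCV hzC, by rw [hzk.2, ← hak.2, hfa]⟩)
  · exact hab (hinj (mem_insert_of_mem ha) (mem_insert_of_mem hb) (hfa.trans hfb.symm))

lemma card_eq_and_exists_small_class (hr : 3 ≤ r) (hRr : R.card < r) :
    R.card = r - 1 ∧ ∃ C₀ ∈ R, C₀.card < r ∧ ∀ C ∈ R, C ≠ C₀ → C.card = r := by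
  have hle : ∀ C ∈ R, C.card ≤ r := fun C hC => card_le_of_mem hR hr hC
  have hpos : r * 1 ≤ r * (r - 1) := Nat.mul_le_mul_left r (by omega)
  have hcomm : (r - 1) * r = r * (r - 1) := mul_comm _ _
  have hsum : ∑ C ∈ R, C.card = r * (r - 1) - 1 := hR.sum_card_eq.trans (card_range _)
  have hdef : ∑ C ∈ R, (r - C.card) + (r * (r - 1) - 1) = R.card * r := by
    rw [← hsum, ← sum_add_distrib, sum_congr rfl fun C hC => Nat.sub_add_cancel (hle C hC),
      sum_const, smul_eq_mul]
  have hcard : R.card = r - 1 := by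
    by_contra h
    have := Nat.mul_le_mul_right r (show R.card + 1 ≤ r - 1 by omega)
    rw [add_mul, one_mul] at this
    omega
  have hone : ∑ C ∈ R, (r - C.card) = 1 := by
    rw [hcard] at hdef
    omega
  obtain ⟨C₀, hC₀, hC₀r⟩ := exists_ne_zero_of_sum_ne_zero (hone ▸ one_ne_zero)
  refine ⟨hcard, C₀, hC₀, by omega, fun C hC hCC₀ => ?_⟩
  have := add_le_sum (fun i _ => Nat.zero_le (r - card i)) hC₀ hC (Ne.symm hCC₀)
  have := hle C hC
  omega

lemma exists_eq_fineClass (hr : 2 ≤ r) {C D : Finset ℕ} (hC : C ∈ R) (hD : D ∈ R) (hCD : C ≠ D)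
    (hCr : C.card = r) (hDr : D.card = r) : ∃ j, 2 ≤ j ∧ C = fineClass r j := by
  have hclass : ∀ E ∈ R, E.card = r →
      (∃ j, 2 ≤ j ∧ j < r ∧ E = fineClass r j) ∨ Set.InjOn (fine r) E := fun E hE hEr =>
    eq_fineClass_or_injOn hr (hR.2.1 E hE) hEr (hR.notMem_edges_of_subset hE subset_rfl)
  rcases hclass C hC hCr with ⟨j, hj, -, hCj⟩ | hCinj
  · exact ⟨j, hj, hCj⟩
  exfalso
  rcases hclass D hD hDr with ⟨k, -, hkr, rfl⟩ | hDinj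
  · obtain ⟨t, ht, htk⟩ := exists_mem_fine_eq_of_injOn (hR.2.1 C hC) hCr hCinj hkr
    exact hCD (hR.eq_of_mem_of_mem hC hD ht (mem_filter.2 ⟨hR.2.1 C hC ht, htk⟩))
  · exact hCD (hR.eq_of_mem_of_mem hC hD
      (zero_mem_of_injOn (hR.2.1 C hC) hCr (by omega) hCinj)
      (zero_mem_of_injOn (hR.2.1 D hD) hDr (by omega) hDinj))

lemma eq_coarseColoring (hr : 4 ≤ r) (hRr : R.card < r) : R = coarseColoring r := by
  obtain ⟨hcard, C₀, hC₀, hC₀r, hbig⟩ := card_eq_and_exists_small_class hR (by omega) hRr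
  have hfine : ∀ C ∈ R, C ≠ C₀ → ∃ j, 2 ≤ j ∧ C = fineClass r j := by
    intro C hC hCC₀
    obtain ⟨D, hD⟩ : ((R.erase C₀).erase C).Nonempty := by
      rw [← card_pos, card_erase_of_mem (mem_erase.2 ⟨hCC₀, hC⟩), card_erase_of_mem hC₀]
      omega
    simp only [mem_erase] at hD
    exact exists_eq_fineClass hR (by omega) hC hD.2.2 (Ne.symm hD.1) (hbig C hC hCC₀)
      (hbig D hD.2.2 hD.2.1)
  have hC₀eq : C₀ = (vertices r).filter (coarse r · = 1) := by
    refine (eq_of_subset_of_card_le (fun v hv => ?_) ?_).symm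
    · obtain ⟨hvV, hv1⟩ := mem_filter.1 hv
      obtain ⟨D, hD, hvD⟩ := hR.exists_mem hvV
      by_contra hvC₀
      obtain ⟨j, hj, rfl⟩ := hfine D hD fun h => hvC₀ (h ▸ hvD)
      have := fine_le_coarse (r := r) v
      have := (mem_filter.1 hvD).2
      omega
    · rw [filter_coarse_eq_one (by omega), card_range]
      omega
  refine hR.eq_fibers (isStrictColoring_coarseColoring (by omega)) fun C hC => ?_
  by_cases hCC₀ : C = C₀
  · exact ⟨1, hCC₀.trans hC₀eq⟩
  · obtain ⟨j, hj, rfl⟩ := hfine C hC hCC₀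
    exact ⟨j, fineClass_eq_filter_coarse (by omega) hj⟩

end CoarseCase

end PairRealization

theorem stmt19 (r : ℕ) (hr : 4 ≤ r) :
    ∃ H : BiHypergraph ℕ, H.IsUniform r ∧
      H.verts.card = r * (r - 1) - 1 ∧
      H.IsOneRealization {r, r - 1} := by
  have hcard_fine := PairRealization.card_fineColoring (show 3 ≤ r by omega)
  have hcard_coarse := PairRealization.card_coarseColoring (show 2 ≤ r by omega)
  have h := BiHypergraph.isOneRealization_of_forall_eq_or_eq
    PairRealization.isStrictColoring_fineColoring
    (PairRealization.isStrictColoring_coarseColoring (by omega)) (by omega)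
    fun R hR => (le_or_gt r R.card).imp (PairRealization.eq_fineColoring hR (by omega))
      (PairRealization.eq_coarseColoring hR hr)
  rw [hcard_fine, hcard_coarse] at h
  exact ⟨PairRealization.hypergraph r, PairRealization.isUniform_hypergraph, card_range _, h⟩
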